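/- arXiv:2003.03171 — 5 statements merged into one kernel-verified Lean document; each statement's English description precedes it below -/
import Mathlib

section
/- Let $Q$ be a finite quiver and $\eta\in\mathbb{R}^{Q_0}$. The full subcategory of finite-dimensional representations of $Q$ consisting of the zero representation together with all $\eta$-semistable representations of slope zero is closed under kernels, cokernels, and extensions (hence is an abelian subcategory), and every object in it has finite length with simple objects exactly the $\eta$-stable representations. -/
/-- The full subcategory of `η`-semistable representations of slope zero (together
with `0`) is closed under kernels, cokernels and extensions, every object has finite length,
and its simple objects are exactly the `η`-stable representations. Concretely, with
`θ(W) = ∑_v η_v dim W_v`: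
(kernel/cokernel) for a morphism `φ : E → F` of semistable slope-zero representations, the kernel
subrepresentation has `θ = 0` and is semistable, and the image has `θ = 0` with every
subrepresentation of `F` containing it of slope `≤ 0` (so the cokernel is semistable of slope 0);
(extension) if a representation `G` has a subrepresentation `W0` such that `W0` and `G/W0` are
semistable of slope zero, then `G` is semistable of slope zero;
(finite length) chains of slope-zero subrepresentations of a semistable representation are
bounded; (simples) a nonzero semistable slope-zero representation is stable iff its only
slope-zero subrepresentations are `0` and the whole representation. -/
theorem stmt_5
    (k : Type) [Field k] (Q0 Q1 : Type) [Fintype Q0] [Fintype Q1]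
    (s t : Q1 → Q0) (η : Q0 → ℝ)
    -- kernel/cokernel data: a morphism φ between semistable slope-zero representations E, F
    (E : Q0 → Type) [∀ v, AddCommGroup (E v)] [∀ v, Module k (E v)]
    [∀ v, FiniteDimensional k (E v)]
    (TE : ∀ a : Q1, E (s a) →ₗ[k] E (t a))
    (F : Q0 → Type) [∀ v, AddCommGroup (F v)] [∀ v, Module k (F v)]
    [∀ v, FiniteDimensional k (F v)]
    (TF : ∀ a : Q1, F (s a) →ₗ[k] F (t a))
    (hEslope : ∑ v, η v * (Module.finrank k (E v) : ℝ) = 0)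
    (hEsemi : ∀ W : ∀ v, Submodule k (E v),
        (∀ a, ∀ x ∈ W (s a), TE a x ∈ W (t a)) →
        ∑ v, η v * (Module.finrank k (W v) : ℝ) ≤ 0)
    (hFslope : ∑ v, η v * (Module.finrank k (F v) : ℝ) = 0)
    (hFsemi : ∀ W : ∀ v, Submodule k (F v),
        (∀ a, ∀ x ∈ W (s a), TF a x ∈ W (t a)) →
        ∑ v, η v * (Module.finrank k (W v) : ℝ) ≤ 0)
    (φ : ∀ v, E v →ₗ[k] F v)
    (hφ : ∀ a x, φ (t a) (TE a x) = TF a (φ (s a) x))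
    -- extension data: a representation G with a subrepresentation W0 such that both W0 and the
    -- quotient G/W0 are semistable of slope zero
    (G : Q0 → Type) [∀ v, AddCommGroup (G v)] [∀ v, Module k (G v)]
    [∀ v, FiniteDimensional k (G v)]
    (TG : ∀ a : Q1, G (s a) →ₗ[k] G (t a))
    (W0 : ∀ v, Submodule k (G v))
    (hW0sub : ∀ a, ∀ x ∈ W0 (s a), TG a x ∈ W0 (t a))
    (hW0slope : ∑ v, η v * (Module.finrank k (W0 v) : ℝ) = 0)
    (hW0semi : ∀ W : ∀ v, Submodule k (G v),
        (∀ a, ∀ x ∈ W (s a), TG a x ∈ W (t a)) → (∀ v, W v ≤ W0 v) →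
        ∑ v, η v * (Module.finrank k (W v) : ℝ) ≤ 0)
    (hGslope : ∑ v, η v * (Module.finrank k (G v) : ℝ) = 0)
    (hQuotsemi : ∀ W : ∀ v, Submodule k (G v),
        (∀ a, ∀ x ∈ W (s a), TG a x ∈ W (t a)) → (∀ v, W0 v ≤ W v) →
        ∑ v, η v * (Module.finrank k (W v) : ℝ)
          - ∑ v, η v * (Module.finrank k (W0 v) : ℝ) ≤ 0) :
    -- closed under kernels: the kernel of φ has slope 0 and is semistable
    ((∑ v, η v * (Module.finrank k (LinearMap.ker (φ v)) : ℝ) = 0)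
      ∧ ∀ W : ∀ v, Submodule k (E v),
          (∀ a, ∀ x ∈ W (s a), TE a x ∈ W (t a)) →
          (∀ v, W v ≤ LinearMap.ker (φ v)) →
          ∑ v, η v * (Module.finrank k (W v) : ℝ) ≤ 0)
    -- closed under cokernels: the image of φ has slope 0, and every subrepresentation of F
    -- containing it has slope ≤ 0 (i.e. the cokernel is semistable of slope zero)
    ∧ ((∑ v, η v * (Module.finrank k (LinearMap.range (φ v)) : ℝ) = 0)
      ∧ ∀ W : ∀ v, Submodule k (F v),
          (∀ a, ∀ x ∈ W (s a), TF a x ∈ W (t a)) →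
          (∀ v, LinearMap.range (φ v) ≤ W v) →
          ∑ v, η v * (Module.finrank k (W v) : ℝ)
            - ∑ v, η v * (Module.finrank k (LinearMap.range (φ v)) : ℝ) ≤ 0)
    -- closed under extensions: G is semistable of slope zero
    ∧ (∀ W : ∀ v, Submodule k (G v),
        (∀ a, ∀ x ∈ W (s a), TG a x ∈ W (t a)) →
        ∑ v, η v * (Module.finrank k (W v) : ℝ) ≤ 0)
    -- finite length: strictly increasing chains of slope-zero subrepresentations of E are bounded
    ∧ (∀ (m : ℕ) (c : Fin m → ∀ v, Submodule k (E v)),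
        (∀ j, (∀ a, ∀ x ∈ c j (s a), TE a x ∈ c j (t a))
          ∧ ∑ v, η v * (Module.finrank k (c j v) : ℝ) = 0) →
        StrictMono c → m ≤ (∑ v, Module.finrank k (E v)) + 1)
    -- simple objects are exactly the stable ones: for the nonzero semistable slope-zero
    -- representation E, stability is equivalent to having no nontrivial slope-zero
    -- subrepresentations
    ∧ ((∃ v, Nontrivial (E v)) →
        ((∀ W : ∀ v, Submodule k (E v),
            (∀ a, ∀ x ∈ W (s a), TE a x ∈ W (t a)) →
            (∃ v, W v ≠ ⊥) → (∃ v, W v ≠ ⊤) →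
            ∑ v, η v * (Module.finrank k (W v) : ℝ) < 0)
          ↔ (∀ W : ∀ v, Submodule k (E v),
              (∀ a, ∀ x ∈ W (s a), TE a x ∈ W (t a)) →
              ∑ v, η v * (Module.finrank k (W v) : ℝ) = 0 →
              (∀ v, W v = ⊥) ∨ (∀ v, W v = ⊤)))) := by

  classical
  -- kernel subrep
  have hKsub : ∀ a, ∀ x ∈ LinearMap.ker (φ (s a)), TE a x ∈ LinearMap.ker (φ (t a)) := by
    intro a x hx
    simp only [LinearMap.mem_ker] at hx ⊢
    rw [hφ a x, hx, map_zero]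
  -- range subrep
  have hRsub : ∀ a, ∀ x ∈ LinearMap.range (φ (s a)), TF a x ∈ LinearMap.range (φ (t a)) := by
    intro a x hx
    obtain ⟨y, rfl⟩ := hx
    exact ⟨TE a y, (hφ a y)⟩
  have hKle := hEsemi (fun v => LinearMap.ker (φ v)) hKsub
  have hRle := hFsemi (fun v => LinearMap.range (φ v)) hRsub
  have hsum : ∑ v, η v * (Module.finrank k (LinearMap.ker (φ v)) : ℝ)
      + ∑ v, η v * (Module.finrank k (LinearMap.range (φ v)) : ℝ) = 0 := by
    rw [← Finset.sum_add_distrib, ← hEslope]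
    apply Finset.sum_congr rfl
    intro v _
    have h := LinearMap.finrank_range_add_finrank_ker (φ v)
    have : (Module.finrank k (LinearMap.range (φ v)) : ℝ)
        + (Module.finrank k (LinearMap.ker (φ v)) : ℝ) = (Module.finrank k (E v) : ℝ) := by
      exact_mod_cast h
    linear_combination η v * this
  have hK0 : ∑ v, η v * (Module.finrank k (LinearMap.ker (φ v)) : ℝ) = 0 := by linarith
  have hR0 : ∑ v, η v * (Module.finrank k (LinearMap.range (φ v)) : ℝ) = 0 := by linarith
  refine ⟨⟨hK0, ?_⟩, ⟨hR0, ?_⟩, ?_, ?_, ?_⟩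
  · intro W hW _; exact hEsemi W hW
  · intro W hW _
    have := hFsemi W hW
    linarith
  · -- extension
    intro W hW
    have hinf : ∀ a, ∀ x ∈ (W (s a)) ⊓ (W0 (s a)), TG a x ∈ (W (t a)) ⊓ (W0 (t a)) := by
      intro a x hx
      exact ⟨hW a x hx.1, hW0sub a x hx.2⟩
    have hsup : ∀ a, ∀ x ∈ (W (s a)) ⊔ (W0 (s a)), TG a x ∈ (W (t a)) ⊔ (W0 (t a)) := by
      intro a x hx
      obtain ⟨y, hy, z, hz, rfl⟩ := Submodule.mem_sup.mp hx
      rw [map_add]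
      exact Submodule.add_mem_sup (hW a y hy) (hW0sub a z hz)
    have h1 := hW0semi (fun v => W v ⊓ W0 v) hinf (fun v => inf_le_right)
    have h2 := hQuotsemi (fun v => W v ⊔ W0 v) hsup (fun v => le_sup_right)
    have key : ∑ v, η v * (Module.finrank k ((W v) ⊔ (W0 v) : Submodule k (G v)) : ℝ)
        + ∑ v, η v * (Module.finrank k ((W v) ⊓ (W0 v) : Submodule k (G v)) : ℝ)
        = ∑ v, η v * (Module.finrank k (W v) : ℝ)
          + ∑ v, η v * (Module.finrank k (W0 v) : ℝ) := by
      rw [← Finset.sum_add_distrib, ← Finset.sum_add_distrib]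
      apply Finset.sum_congr rfl
      intro v _
      have h := Submodule.finrank_sup_add_finrank_inf_eq (W v) (W0 v)
      have : (Module.finrank k ((W v) ⊔ (W0 v) : Submodule k (G v)) : ℝ)
          + (Module.finrank k ((W v) ⊓ (W0 v) : Submodule k (G v)) : ℝ)
          = (Module.finrank k (W v) : ℝ) + (Module.finrank k (W0 v) : ℝ) := by
        exact_mod_cast h
      linear_combination η v * this
    linarith
  · -- finite length
    intro m c hc hmono
    set N := ∑ v, Module.finrank k (E v) with hN
    have hDlt : ∀ j : Fin m, ∑ v, Module.finrank k (c j v) < N + 1 := by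
      intro j
      have : ∀ v, Module.finrank k (c j v) ≤ Module.finrank k (E v) := fun v =>
        Submodule.finrank_le (c j v)
      have := Finset.sum_le_sum (fun v (_ : v ∈ Finset.univ) => this v)
      omega
    have hD : StrictMono (fun j : Fin m => (⟨∑ v, Module.finrank k (c j v), hDlt j⟩ : Fin (N+1))) := by
      intro i j hij
      have hlt : c i < c j := hmono hij
      have hle : ∀ v, c i v ≤ c j v := fun v => hlt.1 v
      have hne : c i ≠ c j := ne_of_lt hlt
      have : ∃ v, c i v ≠ c j v := by
        by_contra h
        push_neg at h
        exact hne (funext h)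
      obtain ⟨v, hv⟩ := this
      have hstrict : Module.finrank k (c i v) < Module.finrank k (c j v) :=
        Submodule.finrank_lt_finrank_of_lt (lt_of_le_of_ne (hle v) hv)
      have : ∑ w, Module.finrank k (c i w) < ∑ w, Module.finrank k (c j w) :=
        Finset.sum_lt_sum (fun w _ => Submodule.finrank_mono (hle w))
          ⟨v, Finset.mem_univ v, hstrict⟩
      exact this
    have := Fintype.card_le_of_injective _ hD.injective
    simpa using this
  · -- simples
    intro _
    constructor
    · intro hstab W hW hW0'
      by_cases hbot : ∀ v, W v = ⊥
      · exact Or.inl hbot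
      by_cases htop : ∀ v, W v = ⊤
      · exact Or.inr htop
      push_neg at hbot htop
      have := hstab W hW hbot htop
      linarith
    · intro htriv W hW hbot htop
      have hle := hEsemi W hW
      rcases lt_or_eq_of_le hle with h | h
      · exact h
      · rcases htriv W hW h with hb | ht
        · obtain ⟨v, hv⟩ := hbot; exact absurd (hb v) hv
        · obtain ⟨v, hv⟩ := htop; exact absurd (ht v) hv
end

section
/- With notation as in the Hamiltonian lift on the space of connections: for $u_1,u_2$ skew-adjoint matrices over a $*$-algebra $\mathcal{A}$ and $\omega_0$ the matrix extension of an invariant pairing, one has $\mathrm{Im}\,\omega_0(du_1,\overline{du_2}) = \eta(\mathrm{Tr}([u_1,u_2]))$, where $\eta$ is any linear functional on $\mathcal{A}$ satisfying $\eta([f,g])=\frac{-1}{2\sqrt{-1}}(\omega(df,\overline{d(g^*)})-\omega(dg,\overline{d(f^*)}))$. -/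
open Matrix

/-- For skew-adjoint matrices `u₁, u₂` over a `*`-algebra `A`, with `d` a derivation
applied entrywise and `ω₀` the matrix extension of a pairing `ω` with Hermitian symmetry
`ω(α, β̄) = conj ω(β, ᾱ)`, one has `Im ω₀(du₁, conj du₂) = η(Tr [u₁,u₂])` for any linear
functional `η` with `η([f,g]) = (-1/(2√-1))·(ω(df, conj d(g*)) - ω(dg, conj d(f*)))`.
(The second slot of `ω` holds the underlying element of the conjugate.) -/
theorem stmt_9 (A : Type) [Ring A] [Algebra ℂ A] [StarRing A] [StarModule ℂ A]
    (Ω : Type) [AddCommGroup Ω] [Module ℂ Ω]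
    (lact : A → Ω → Ω) (ract : Ω → A → Ω)
    (hl1 : ∀ x, lact 1 x = x) (hr1 : ∀ x, ract x 1 = x)
    (hladd : ∀ f x y, lact f (x + y) = lact f x + lact f y)
    (hradd : ∀ x y g, ract (x + y) g = ract x g + ract y g)
    (d : A → Ω)
    (hdadd : ∀ f g, d (f + g) = d f + d g)
    (hd : ∀ f g, d (f * g) = lact f (d g) + ract (d f) g)
    (ω : Ω → Ω → ℂ)
    (hωl : ∀ x y b, ω (x + y) b = ω x b + ω y b)
    (hωr : ∀ x b c, ω x (b + c) = ω x b + ω x c)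
    (hherm : ∀ x y, ω x y = starRingEnd ℂ (ω y x))
    (η : A →ₗ[ℂ] ℂ)
    (hη : ∀ f g : A, η (f * g - g * f)
        = (-1) / (2 * Complex.I) * (ω (d f) (d (star g)) - ω (d g) (d (star f))))
    (n : ℕ)
    (u1 u2 : Matrix (Fin n) (Fin n) A)
    (hu1 : ∀ i j, star (u1 i j) = - u1 j i) (hu2 : ∀ i j, star (u2 i j) = - u2 j i) :
    (((∑ i, ∑ j, ω (d (u1 i j)) (d (u2 i j))).im : ℝ) : ℂ)
      = η ((u1 * u2 - u2 * u1).trace) := by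
  have hd0 : d 0 = 0 := by
    have h := hdadd 0 0
    rw [add_zero] at h
    nth_rewrite 1 [← add_zero (d 0)] at h
    exact (add_left_cancel h).symm
  have hdneg : ∀ f, d (-f) = - d f := by
    intro f
    have h := hdadd f (-f)
    rw [add_neg_cancel, hd0] at h
    exact (neg_eq_of_add_eq_zero_right h.symm).symm
  have hωneg : ∀ x y, ω x (-y) = - ω x y := by
    intro x y
    have h0 : ω x 0 = 0 := by
      have h2 := hωr x 0 0
      rw [add_zero] at h2
      nth_rewrite 1 [← add_zero (ω x 0)] at h2
      exact (add_left_cancel h2).symm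
    have h := hωr x y (-y)
    rw [add_neg_cancel, h0] at h
    exact (neg_eq_of_add_eq_zero_right h.symm).symm
  set S := ∑ i, ∑ j, ω (d (u1 i j)) (d (u2 i j)) with hS
  have htr : (u1 * u2 - u2 * u1).trace
      = ∑ i, ∑ j, (u1 i j * u2 j i - u2 j i * u1 i j) := by
    have h2 : (∑ i : Fin n, ∑ j : Fin n, u2 i j * u1 j i)
        = ∑ i : Fin n, ∑ j : Fin n, u2 j i * u1 i j := by rw [Finset.sum_comm]
    simp only [Matrix.trace, Matrix.diag, Matrix.sub_apply, Matrix.mul_apply,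
      Finset.sum_sub_distrib]
    rw [h2]
  rw [htr]
  simp only [map_sum, hη, hu1, hu2, hdneg, hωneg]
  have hT : ∑ i : Fin n, ∑ j : Fin n, ω (d (u2 j i)) (d (u1 j i)) = starRingEnd ℂ S := by
    rw [Finset.sum_comm, hS, map_sum]
    exact Finset.sum_congr rfl fun i _ => by
      rw [map_sum]; exact Finset.sum_congr rfl fun j _ => hherm _ _
  have expand : ∀ (i j : Fin n),
      (-1) / (2 * Complex.I) * (-ω (d (u1 i j)) (d (u2 i j)) - -ω (d (u2 j i)) (d (u1 j i)))
      = (-1) / (2 * Complex.I) * (-ω (d (u1 i j)) (d (u2 i j)))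
        + (-1) / (2 * Complex.I) * (ω (d (u2 j i)) (d (u1 j i))) := by
    intro i j; ring
  rw [Finset.sum_congr rfl fun i _ => Finset.sum_congr rfl fun j _ => expand i j]
  simp only [Finset.sum_add_distrib, ← Finset.mul_sum, Finset.sum_neg_distrib]
  rw [hT, ← hS]
  have hsc := Complex.sub_conj S
  have hI := Complex.I_ne_zero
  field_simp
  linear_combination (norm := (push_cast; ring)) (-1 : ℂ) * hsc
end

section
/- Fix $n\geq 1$, $\hbar>0$, $\rho>0$. Let $\mathcal{A}$ be the unital $*$-algebra generated by $z_1,\dots,z_n,z_1^*,\dots,z_n^*$ with relations $[z_i,z_j]=0$, $[z_i^*,z_j^*]=0$, $[z_i^*,z_j]=\hbar\delta_{ij}$, and let $\int_\rho:\mathcal{A}\to\mathbb{C}$ be the linear functional defined on the normal-ordered basis by $\int_\rho \prod_i z_i^{k_i}\prod_i (z_i^*)^{l_i}=\prod_i \delta_{k_i,l_i}\, k_i!\,\rho^{k_i}$. Then for all $a\in\mathcal{A}$ and all $i$: $\int_\rho z_i\cdot a = \frac{\rho}{\rho+\hbar}\int_\rho a\cdot z_i$. -/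
/-!
Left multiplication by `zᵢ` raises the exponent `kᵢ` of a normal-ordered monomial, while right
multiplication by `zᵢ` must first be commuted past `(zᵢ*)^{lᵢ}`, which by the canonical
commutation relation produces the extra term `lᵢ ℏ (zᵢ*)^{lᵢ-1}`. On the Gaussian moments
`δ_{k,l} k! ρ^k` the first term contributes `lᵢ ρ` times the moment of the lowered monomial and
the second `lᵢ ℏ` times the same moment, whence the factor `ρ / (ρ + ℏ)`.
-/

open Function

section PowProd

variable {M : Type*} [Monoid M] {n : ℕ}

def powProd (g : Fin n → M) (k : Fin n → ℕ) : M :=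
  ((List.finRange n).map fun j => g j ^ k j).prod

theorem powProd_eq_noncommProd {g : Fin n → M} (hg : ∀ p q, Commute (g p) (g q))
    (k : Fin n → ℕ) :
    powProd g k = Finset.univ.noncommProd (fun j => g j ^ k j)
      (Pairwise.set_pairwise (fun p q _ => (hg p q).pow_pow (k p) (k q)) _) := by
  simp only [powProd, Finset.noncommProd, Fin.univ_def, Multiset.map_coe, Multiset.noncommProd_coe]

theorem powProd_update {g : Fin n → M} (hg : ∀ p q, Commute (g p) (g q))
    (k : Fin n → ℕ) (i : Fin n) (v : ℕ) :
    powProd g (update k i v) = g i ^ v * powProd g (update k i 0) := by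
  classical
  rw [powProd_eq_noncommProd hg, powProd_eq_noncommProd hg,
    ← Finset.mul_noncommProd_erase _ (Finset.mem_univ i),
    ← Finset.mul_noncommProd_erase _ (Finset.mem_univ i)]
  simp only [update_self, pow_zero, one_mul]
  congr 1
  exact Finset.noncommProd_congr rfl (fun j hj => by simp [Finset.ne_of_mem_erase hj]) _

theorem mul_powProd {g : Fin n → M} (hg : ∀ p q, Commute (g p) (g q))
    (k : Fin n → ℕ) (i : Fin n) :
    g i * powProd g k = powProd g (update k i (k i + 1)) := by
  conv_lhs => rw [← update_eq_self i k, powProd_update hg k i (k i)]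
  rw [powProd_update hg k i (k i + 1), ← mul_assoc, ← pow_succ']

theorem commute_powProd {g : Fin n → M} {k : Fin n → ℕ} {x : M}
    (hx : ∀ j, k j ≠ 0 → Commute x (g j)) : Commute x (powProd g k) := by
  refine Commute.list_prod_right _ _ fun y hy => ?_
  obtain ⟨j, -, rfl⟩ := List.mem_map.mp hy
  by_cases hj : k j = 0
  · simp [hj]
  · exact (hx j hj).pow_right _

end PowProd

section CommutationRelation

variable {R A : Type*} [CommSemiring R] [Semiring A] [Algebra R A]

-- At `m = 0` the truncated `m - 1` is harmless: its coefficient vanishes.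
theorem pow_mul_eq_of_mul_eq {x y : A} {c : R} (h : y * x = x * y + algebraMap R A c) (m : ℕ) :
    y ^ m * x = x * y ^ m + (m * c) • y ^ (m - 1) := by
  induction m with
  | zero => simp
  | succ m ih =>
    rw [pow_succ, mul_assoc, h, mul_add, ← mul_assoc, ih, ← Algebra.commutes, ← Algebra.smul_def]
    rcases m with _ | m
    · simp
    · simp only [add_mul, mul_assoc, ← pow_succ, smul_mul_assoc, Nat.add_sub_cancel]
      push_cast
      module

variable {n : ℕ} {z w : Fin n → A} {c : R} {i : Fin n}

theorem powProd_mul_of_mul_eq (hw : ∀ p q, Commute (w p) (w q))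
    (hzw : ∀ j ≠ i, Commute (z i) (w j)) (h : w i * z i = z i * w i + algebraMap R A c)
    (l : Fin n → ℕ) :
    powProd w l * z i = z i * powProd w l + (l i * c) • powProd w (update l i (l i - 1)) := by
  have hl : powProd w l = w i ^ l i * powProd w (update l i 0) := by
    conv_lhs => rw [← update_eq_self i l]
    exact powProd_update hw _ _ _
  have hcomm : Commute (z i) (powProd w (update l i 0)) :=
    commute_powProd fun j hj => hzw j (by rintro rfl; simp at hj)
  rw [hl, mul_assoc, ← hcomm.eq, ← mul_assoc, pow_mul_eq_of_mul_eq h, add_mul, mul_assoc,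
    smul_mul_assoc, powProd_update hw l i (l i - 1)]

theorem powProd_mul_powProd_mul_of_mul_eq (hz : ∀ p q, Commute (z p) (z q))
    (hw : ∀ p q, Commute (w p) (w q)) (hzw : ∀ j ≠ i, Commute (z i) (w j))
    (h : w i * z i = z i * w i + algebraMap R A c) (k l : Fin n → ℕ) :
    powProd z k * powProd w l * z i =
      powProd z (update k i (k i + 1)) * powProd w l +
        (l i * c) • (powProd z k * powProd w (update l i (l i - 1))) := by
  rw [mul_assoc, powProd_mul_of_mul_eq hw hzw h, mul_add, ← mul_assoc,
    ← (commute_powProd fun j _ => hz i j).eq, mul_powProd hz, mul_smul_comm]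

end CommutationRelation

def gaussianMoment {R : Type*} [CommSemiring R] {n : ℕ} (ρ : R) (k l : Fin n → ℕ) : R :=
  if k = l then ∏ j, ((k j).factorial : R) * ρ ^ k j else 0

theorem gaussianMoment_update_succ_left {R : Type*} [CommSemiring R] {n : ℕ} (ρ : R)
    (k l : Fin n → ℕ) (i : Fin n) :
    gaussianMoment ρ (update k i (k i + 1)) l =
      (l i * ρ) * gaussianMoment ρ k (update l i (l i - 1)) := by
  classical
  unfold gaussianMoment
  by_cases h : update k i (k i + 1) = l
  · subst h
    have hprod : ∀ v, ∏ j, ((update k i v j).factorial : R) * ρ ^ update k i v j =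
        ((v.factorial : R) * ρ ^ v) * ∏ j ∈ Finset.univ.erase i, ((k j).factorial : R) * ρ ^ k j :=
      fun v => by
        rw [← Finset.mul_prod_erase _ _ (Finset.mem_univ i), update_self]
        congr 1
        exact Finset.prod_congr rfl fun j hj => by rw [update_of_ne (Finset.ne_of_mem_erase hj)]
    simp only [update_self, update_idem, Nat.add_sub_cancel, update_eq_self, if_true]
    rw [hprod, ← Finset.mul_prod_erase _ _ (Finset.mem_univ i), Nat.factorial_succ, pow_succ]
    push_cast
    ring
  · rw [if_neg h]
    by_cases hli : l i = 0
    · simp [hli]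
    · rw [if_neg]
      · simp
      rintro rfl
      apply h
      rw [update_idem, update_self, Nat.sub_add_cancel (Nat.pos_of_ne_zero hli), update_eq_self]

theorem stmt_15_general (n : ℕ) (ℏ ρ : ℝ) (hℏ : 0 < ℏ) (hρ : 0 < ρ)
    (A : Type) [Ring A] [Algebra ℂ A] [StarRing A]
    (z : Fin n → A)
    (hcomm : ∀ i j, z i * z j = z j * z i)
    (hscomm : ∀ i j, star (z i) * star (z j) = star (z j) * star (z i))
    (hccr : ∀ i j, star (z i) * z j - z j * star (z i)
        = if i = j then algebraMap ℂ A ((ℏ : ℝ) : ℂ) else 0)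
    (mono : (Fin n → ℕ) → (Fin n → ℕ) → A)
    (hmono : ∀ k l, mono k l =
      (((List.finRange n).map fun i => z i ^ k i).prod) *
        (((List.finRange n).map fun i => (star (z i)) ^ l i).prod))
    (b : Module.Basis ((Fin n → ℕ) × (Fin n → ℕ)) ℂ A)
    (hb : ∀ kl, b kl = mono kl.1 kl.2)
    (I : A →ₗ[ℂ] ℂ)
    (hI : ∀ k l : Fin n → ℕ, I (mono k l) =
      if k = l then ∏ i, ((Nat.factorial (k i) : ℂ) * ((ρ : ℝ) : ℂ) ^ (k i)) else 0) :
    ∀ (a : A) (i : Fin n), I (z i * a) = (((ρ / (ρ + ℏ) : ℝ)) : ℂ) * I (a * z i) := by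
  intro a i
  have hmono' : ∀ k l, mono k l = powProd z k * powProd (fun j => star (z j)) l := hmono
  have hzs : ∀ j ≠ i, Commute (z i) (star (z j)) := fun j hj =>
    (sub_eq_zero.mp ((hccr j i).trans (if_neg hj))).symm
  have hccr_i : star (z i) * z i = z i * star (z i) + algebraMap ℂ A ℏ :=
    sub_eq_iff_eq_add'.mp ((hccr i i).trans (if_pos rfl))
  have hI' : ∀ k l, I (mono k l) = gaussianMoment (ρ : ℂ) k l := hI
  have hℏρ : (ρ : ℂ) + ℏ ≠ 0 := by exact_mod_cast (add_pos hρ hℏ).ne'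
  have hmonomial : ∀ k l, I (z i * mono k l) = ((ρ / (ρ + ℏ) : ℝ) : ℂ) * I (mono k l * z i) := by
    intro k l
    rw [hmono', ← mul_assoc, mul_powProd hcomm, powProd_mul_powProd_mul_of_mul_eq hcomm hscomm
      hzs hccr_i, map_add, map_smul, ← hmono', ← hmono', hI', hI',
      gaussianMoment_update_succ_left, smul_eq_mul]
    push_cast
    field_simp
  have hext := b.ext (f₁ := I ∘ₗ LinearMap.mulLeft ℂ (z i))
    (f₂ := ((ρ / (ρ + ℏ) : ℝ) : ℂ) • I ∘ₗ LinearMap.mulRight ℂ (z i))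
    fun kl => by simpa [hb] using hmonomial kl.1 kl.2
  simpa using LinearMap.congr_fun hext a

/-- In the `*`-algebra generated by `z₁,…,z_n, z₁*,…,z_n*` with
`[zᵢ,zⱼ]=[zᵢ*,zⱼ*]=0`, `[zᵢ*,zⱼ]=ℏδᵢⱼ` (normal-ordered monomials forming a ℂ-basis), the state
`∫_ρ` determined by `∫_ρ ∏ zᵢ^{kᵢ} ∏ (zᵢ*)^{lᵢ} = ∏ δ_{kᵢ,lᵢ} kᵢ! ρ^{kᵢ}` satisfies
`∫_ρ zᵢ·a = (ρ/(ρ+ℏ)) ∫_ρ a·zᵢ` for all `a` and `i`. -/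
theorem stmt_15 (n : ℕ) (hn : 1 ≤ n) (ℏ ρ : ℝ) (hℏ : 0 < ℏ) (hρ : 0 < ρ)
    (A : Type) [Ring A] [Algebra ℂ A] [StarRing A] [StarModule ℂ A]
    (z : Fin n → A)
    (hcomm : ∀ i j, z i * z j = z j * z i)
    (hscomm : ∀ i j, star (z i) * star (z j) = star (z j) * star (z i))
    (hccr : ∀ i j, star (z i) * z j - z j * star (z i)
        = if i = j then algebraMap ℂ A ((ℏ : ℝ) : ℂ) else 0)
    (mono : (Fin n → ℕ) → (Fin n → ℕ) → A)
    (hmono : ∀ k l, mono k l =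
      (((List.finRange n).map fun i => z i ^ k i).prod) *
        (((List.finRange n).map fun i => (star (z i)) ^ l i).prod))
    (b : Module.Basis ((Fin n → ℕ) × (Fin n → ℕ)) ℂ A)
    (hb : ∀ kl, b kl = mono kl.1 kl.2)
    (I : A →ₗ[ℂ] ℂ)
    (hI : ∀ k l : Fin n → ℕ, I (mono k l) =
      if k = l then ∏ i, ((Nat.factorial (k i) : ℂ) * ((ρ : ℝ) : ℂ) ^ (k i)) else 0) :
    ∀ (a : A) (i : Fin n), I (z i * a) = (((ρ / (ρ + ℏ) : ℝ)) : ℂ) * I (a * z i) :=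
  stmt_15_general n ℏ ρ hℏ hρ A z hcomm hscomm hccr mono hmono b hb I hI
end

section
/- With $\mathcal{A}$, $\int_\rho$ as above, and $\overline{\partial}_i$ the derivation of $\mathcal{A}$ determined by $\overline{\partial}_i(z_j)=0$, $\overline{\partial}_i(z_j^*)=\delta_{ij}$: for all $a\in\mathcal{A}$ and all $i$, $\int_\rho \overline{\partial}_i(a)=\frac{1}{\rho+\hbar}\int_\rho a\cdot z_i$. -/
/-- With the Weyl-type `*`-algebra `A` and state `∫_ρ` as in Statement 15, and
`∂̄ᵢ` the derivation of `A` with `∂̄ᵢ(zⱼ)=0`, `∂̄ᵢ(zⱼ*)=δᵢⱼ`, one has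
`∫_ρ ∂̄ᵢ(a) = (1/(ρ+ℏ)) ∫_ρ a·zᵢ` for all `a ∈ A`. -/
theorem stmt_16 (n : ℕ) (hn : 1 ≤ n) (ℏ ρ : ℝ) (hℏ : 0 < ℏ) (hρ : 0 < ρ)
    (A : Type) [Ring A] [Algebra ℂ A] [StarRing A] [StarModule ℂ A]
    (z : Fin n → A)
    (hcomm : ∀ i j, z i * z j = z j * z i)
    (hscomm : ∀ i j, star (z i) * star (z j) = star (z j) * star (z i))
    (hccr : ∀ i j, star (z i) * z j - z j * star (z i)
        = if i = j then algebraMap ℂ A ((ℏ : ℝ) : ℂ) else 0)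
    (mono : (Fin n → ℕ) → (Fin n → ℕ) → A)
    (hmono : ∀ k l, mono k l =
      (((List.finRange n).map fun i => z i ^ k i).prod) *
        (((List.finRange n).map fun i => (star (z i)) ^ l i).prod))
    (b : Module.Basis ((Fin n → ℕ) × (Fin n → ℕ)) ℂ A)
    (hb : ∀ kl, b kl = mono kl.1 kl.2)
    (I : A →ₗ[ℂ] ℂ)
    (hI : ∀ k l : Fin n → ℕ, I (mono k l) =
      if k = l then ∏ i, ((Nat.factorial (k i) : ℂ) * ((ρ : ℝ) : ℂ) ^ (k i)) else 0)
    (D : Fin n → (A →ₗ[ℂ] A))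
    (hDleib : ∀ i (x y : A), D i (x * y) = x * D i y + D i x * y)
    (hDz : ∀ i j, D i (z j) = 0)
    (hDzs : ∀ i j, D i (star (z j)) = if i = j then 1 else 0) :
    ∀ (a : A) (i : Fin n), I (D i a) = (((1 / (ρ + ℏ) : ℝ)) : ℂ) * I (a * z i) := by
  intro a i
  have hD1 : D i (1 : A) = 0 := by
    have h := hDleib i 1 1
    simp only [one_mul, mul_one] at h
    exact (right_eq_add.mp h)
  have hpow0 : ∀ x : A, D i x = 0 → ∀ m : ℕ, D i (x ^ m) = 0 := by
    intro x hx m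
    induction m with
    | zero => simpa using hD1
    | succ m ih => rw [pow_succ, hDleib, ih, hx]; simp
  -- power rule at star (z i)
  have hpowi : ∀ m : ℕ, D i (star (z i) ^ (m + 1)) = ((m : ℂ) + 1) • star (z i) ^ m := by
    intro m
    induction m with
    | zero => simpa using hDzs i i
    | succ m ih =>
      rw [pow_succ (star (z i)) (m + 1), hDleib, ih]
      have hDi : D i (star (z i)) = 1 := by simpa using hDzs i i
      rw [hDi, mul_one, smul_mul_assoc, ← pow_succ]
      push_cast; module
  -- D i kills the z-part
  have hDPz : ∀ (k : Fin n → ℕ) (L : List (Fin n)),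
      D i ((L.map fun j => z j ^ k j).prod) = 0 := by
    intro k L
    induction L with
    | nil => simpa using hD1
    | cons j L ih =>
      rw [List.map_cons, List.prod_cons, hDleib, ih, hpow0 (z j) (hDz i j)]; simp
  -- z i commutes with the z-part
  have hziPz : ∀ (k : Fin n → ℕ) (L : List (Fin n)),
      Commute (z i) ((L.map fun j => z j ^ k j).prod) := by
    intro k L
    refine Commute.list_prod_right _ _ ?_
    intro x hx
    rcases List.mem_map.mp hx with ⟨j, _, rfl⟩
    exact Commute.pow_right (hcomm i j) _
  -- D i kills star-parts avoiding i
  have hDPs0 : ∀ (l : Fin n → ℕ) (L : List (Fin n)), i ∉ L →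
      D i ((L.map fun j => star (z j) ^ l j).prod) = 0 := by
    intro l L
    induction L with
    | nil => intro _; simpa using hD1
    | cons j L ih =>
      intro hiL
      have hij : i ≠ j := fun h => hiL (h ▸ List.mem_cons_self (a := j) (l := L))
      have h0 : D i (star (z j)) = 0 := by rw [hDzs]; simp [hij]
      rw [List.map_cons, List.prod_cons, hDleib, ih (fun h => hiL (List.mem_cons_of_mem _ h)),
        hpow0 _ h0]
      simp
  -- derivative of the star-part
  have hDPs : ∀ (l : Fin n → ℕ) (L : List (Fin n)), L.Nodup → i ∈ L →
      D i ((L.map fun j => star (z j) ^ l j).prod)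
        = (l i : ℂ) • (L.map fun j => star (z j) ^ (Function.update l i (l i - 1)) j).prod := by
    intro l L
    induction L with
    | nil => intro _ h; exact absurd h List.not_mem_nil
    | cons j L ih =>
      intro hnd hmem
      have hjL : j ∉ L := (List.nodup_cons.mp hnd).1
      have hndL : L.Nodup := (List.nodup_cons.mp hnd).2
      rw [List.map_cons, List.prod_cons, List.map_cons, List.prod_cons, hDleib]
      by_cases hij : i = j
      · subst hij
        rw [hDPs0 l L hjL]
        have hrest : (L.map fun j => star (z j) ^ (Function.update l i (l i - 1)) j).prod
            = (L.map fun j => star (z j) ^ l j).prod := by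
          congr 1
          refine List.map_congr_left (fun j' hj' => ?_)
          rw [Function.update_of_ne (fun h => hjL (by rw [← h]; exact hj')) _ _]
        rw [hrest, Function.update_self]
        cases hli : l i with
        | zero => rw [pow_zero, hD1]; simp
        | succ m =>
          rw [hpowi m, mul_zero, zero_add, smul_mul_assoc]
          push_cast [Nat.add_sub_cancel]
          try rfl
      · have hiL : i ∈ L := by
          rcases List.mem_cons.mp hmem with h | h
          · exact absurd h hij
          · exact h
        have h0 : D i (star (z j)) = 0 := by rw [hDzs]; simp [hij]
        rw [hpow0 _ h0, ih hndL hiL, Function.update_of_ne (Ne.symm hij)]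
        rw [zero_mul, add_zero, mul_smul_comm]
  -- star (z j) ^ m commutes with z i for j ≠ i
  have hcomm_s : ∀ j : Fin n, j ≠ i → Commute (star (z j)) (z i) := by
    intro j hj
    have h := hccr j i
    rw [if_neg hj, sub_eq_zero] at h
    exact h
  -- commuting z i through star-parts avoiding i
  have hPsz0 : ∀ (l : Fin n → ℕ) (L : List (Fin n)), i ∉ L →
      Commute (z i) ((L.map fun j => star (z j) ^ l j).prod) := by
    intro l L hiL
    refine Commute.list_prod_right _ _ ?_
    intro x hx
    rcases List.mem_map.mp hx with ⟨j, hj, rfl⟩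
    exact ((hcomm_s j (fun h => hiL (h ▸ hj))).symm.pow_right _)
  -- pushing z i through powers of star (z i)
  have hsipow : ∀ m : ℕ, star (z i) ^ (m + 1) * z i
      = z i * star (z i) ^ (m + 1) + ((ℏ : ℂ) * ((m : ℂ) + 1)) • star (z i) ^ m := by
    intro m
    have hbase : star (z i) * z i = z i * star (z i) + ((ℏ : ℝ) : ℂ) • (1 : A) := by
      have h := hccr i i
      rw [if_pos rfl] at h
      rw [sub_eq_iff_eq_add] at h
      rw [h, Algebra.algebraMap_eq_smul_one, add_comm]
    induction m with
    | zero => simpa using hbase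
    | succ m ih =>
      have hs : ((ℏ : ℂ) * ((m : ℂ) + 1)) + (ℏ : ℂ) = (ℏ : ℂ) * ((((m + 1 : ℕ)) : ℂ) + 1) := by
        push_cast; ring
      calc star (z i) ^ (m + 1 + 1) * z i
          = star (z i) ^ (m + 1) * (star (z i) * z i) := by rw [pow_succ, mul_assoc]
        _ = star (z i) ^ (m + 1) * (z i * star (z i)) + (ℏ : ℂ) • star (z i) ^ (m + 1) := by
            rw [hbase, mul_add, mul_smul_comm, mul_one]
        _ = (star (z i) ^ (m + 1) * z i) * star (z i) + (ℏ : ℂ) • star (z i) ^ (m + 1) := by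
            rw [mul_assoc]
        _ = (z i * star (z i) ^ (m + 1)) * star (z i)
              + ((ℏ : ℂ) * ((m : ℂ) + 1)) • (star (z i) ^ m * star (z i))
              + (ℏ : ℂ) • star (z i) ^ (m + 1) := by rw [ih, add_mul, smul_mul_assoc]
        _ = z i * star (z i) ^ (m + 1 + 1)
              + (((ℏ : ℂ) * ((m : ℂ) + 1)) + (ℏ : ℂ)) • star (z i) ^ (m + 1) := by
            rw [mul_assoc, ← pow_succ, ← pow_succ, add_assoc, ← add_smul]
        _ = z i * star (z i) ^ (m + 1 + 1)
              + ((ℏ : ℂ) * ((((m + 1 : ℕ)) : ℂ) + 1)) • star (z i) ^ (m + 1) := by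
            rw [hs]
  -- pushing z i through the star-part
  have hPsz : ∀ (l : Fin n → ℕ) (L : List (Fin n)), L.Nodup → i ∈ L →
      (L.map fun j => star (z j) ^ l j).prod * z i
        = z i * (L.map fun j => star (z j) ^ l j).prod
          + ((ℏ : ℂ) * (l i : ℂ)) •
              (L.map fun j => star (z j) ^ (Function.update l i (l i - 1)) j).prod := by
    intro l L
    induction L with
    | nil => intro _ h; exact absurd h List.not_mem_nil
    | cons j L ih =>
      intro hnd hmem
      have hjL : j ∉ L := (List.nodup_cons.mp hnd).1
      have hndL : L.Nodup := (List.nodup_cons.mp hnd).2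
      rw [List.map_cons, List.prod_cons, List.map_cons, List.prod_cons]
      by_cases hij : i = j
      · subst hij
        have hrest : (L.map fun j => star (z j) ^ (Function.update l i (l i - 1)) j).prod
            = (L.map fun j => star (z j) ^ l j).prod := by
          congr 1
          refine List.map_congr_left (fun j' hj' => ?_)
          rw [Function.update_of_ne (fun h => hjL (by rw [← h]; exact hj')) _ _]
        have hcm : (L.map fun j => star (z j) ^ l j).prod * z i
            = z i * (L.map fun j => star (z j) ^ l j).prod := (hPsz0 l L hjL).symm.eq
        rw [hrest, Function.update_self, mul_assoc, hcm, ← mul_assoc]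
        cases hli : l i with
        | zero => simp
        | succ m =>
          rw [hsipow m, add_mul, smul_mul_assoc, mul_assoc]
          push_cast [Nat.add_sub_cancel]
          try rfl
      · have hiL : i ∈ L := by
          rcases List.mem_cons.mp hmem with h | h
          · exact absurd h hij
          · exact h
        have hcj : star (z j) ^ l j * z i = z i * star (z j) ^ l j :=
          ((hcomm_s j (Ne.symm hij)).pow_left _).eq
        rw [mul_assoc, ih hndL hiL, mul_add, ← mul_assoc, hcj, mul_assoc,
          mul_smul_comm, Function.update_of_ne (Ne.symm hij)]
  -- pushing z i through the z-part
  have hPzz : ∀ (k : Fin n → ℕ) (L : List (Fin n)), L.Nodup → i ∈ L →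
      (L.map fun j => z j ^ k j).prod * z i
        = (L.map fun j => z j ^ (Function.update k i (k i + 1)) j).prod := by
    intro k L
    induction L with
    | nil => intro _ h; exact absurd h List.not_mem_nil
    | cons j L ih =>
      intro hnd hmem
      have hjL : j ∉ L := (List.nodup_cons.mp hnd).1
      have hndL : L.Nodup := (List.nodup_cons.mp hnd).2
      rw [List.map_cons, List.prod_cons, List.map_cons, List.prod_cons]
      by_cases hij : i = j
      · subst hij
        have hrest : (L.map fun j => z j ^ (Function.update k i (k i + 1)) j).prod
            = (L.map fun j => z j ^ k j).prod := by
          congr 1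
          refine List.map_congr_left (fun j' hj' => ?_)
          rw [Function.update_of_ne (fun h => hjL (by rw [← h]; exact hj')) _ _]
        rw [hrest, Function.update_self, mul_assoc, ← (hziPz k L).eq, ← mul_assoc, ← pow_succ]
      · have hiL : i ∈ L := by
          rcases List.mem_cons.mp hmem with h | h
          · exact absurd h hij
          · exact h
        rw [mul_assoc, ih hndL hiL, Function.update_of_ne (Ne.symm hij)]
  -- derivative of a monomial
  have hDmono : ∀ k l : Fin n → ℕ,
      D i (mono k l) = (l i : ℂ) • mono k (Function.update l i (l i - 1)) := by
    intro k l
    rw [hmono, hDleib, hDPz, zero_mul, add_zero,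
      hDPs l _ (List.nodup_finRange n) (List.mem_finRange i), mul_smul_comm,
      hmono k (Function.update l i (l i - 1))]
  -- monomial times z i
  have hMmono : ∀ k l : Fin n → ℕ,
      mono k l * z i = mono (Function.update k i (k i + 1)) l
        + ((ℏ : ℂ) * (l i : ℂ)) • mono k (Function.update l i (l i - 1)) := by
    intro k l
    rw [hmono, mul_assoc, hPsz l _ (List.nodup_finRange n) (List.mem_finRange i),
      mul_add, ← mul_assoc, hPzz k _ (List.nodup_finRange n) (List.mem_finRange i),
      mul_smul_comm, hmono (Function.update k i (k i + 1)) l,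
      hmono k (Function.update l i (l i - 1))]
  -- the scalar computation on monomials
  have key : ∀ k l : Fin n → ℕ,
      I (D i (mono k l)) = (((1 / (ρ + ℏ) : ℝ)) : ℂ) * I (mono k l * z i) := by
    intro k l
    have hρℏ0 : (ρ + ℏ : ℝ) ≠ 0 := by positivity
    have hρℏ : ((ρ : ℝ) : ℂ) + ((ℏ : ℝ) : ℂ) ≠ 0 := by exact_mod_cast hρℏ0
    rw [hDmono, hMmono, map_smul, map_add, map_smul, smul_eq_mul, smul_eq_mul,
      hI, hI]
    set l' := Function.update l i (l i - 1) with hl'def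
    set k' := Function.update k i (k i + 1) with hk'def
    cases hli : l i with
    | zero =>
      have hk2 : k' ≠ l := by
        intro h
        have := congrFun h i
        rw [hk'def, Function.update_self, hli] at this
        exact Nat.succ_ne_zero _ this
      simp [hk2]
    | succ m =>
      by_cases hk : k = l'
      · have hki : k i = m := by
          rw [hk, hl'def, Function.update_self, hli]; omega
        have hk2 : k' = l := by
          funext j
          by_cases hj : j = i
          · subst hj
            rw [hk'def, Function.update_self, hki, hli]
          · rw [hk'def, Function.update_of_ne hj, hk, hl'def, Function.update_of_ne hj]
        rw [if_pos hk, if_pos hk2]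
        have hprod : (∏ j, ((k' j).factorial : ℂ) * ((ρ : ℝ) : ℂ) ^ (k' j))
            = ((k i : ℂ) + 1) * (ρ : ℂ)
              * ∏ j, ((k j).factorial : ℂ) * ((ρ : ℝ) : ℂ) ^ (k j) := by
          rw [← Finset.mul_prod_erase Finset.univ
              (fun j => ((k' j).factorial : ℂ) * ((ρ : ℝ) : ℂ) ^ (k' j)) (Finset.mem_univ i),
            ← Finset.mul_prod_erase Finset.univ
              (fun j => ((k j).factorial : ℂ) * ((ρ : ℝ) : ℂ) ^ (k j)) (Finset.mem_univ i)]
          have herase : (∏ j ∈ Finset.univ.erase i, ((k' j).factorial : ℂ) * ((ρ : ℝ) : ℂ) ^ (k' j))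
              = ∏ j ∈ Finset.univ.erase i, ((k j).factorial : ℂ) * ((ρ : ℝ) : ℂ) ^ (k j) := by
            refine Finset.prod_congr rfl (fun j hj => ?_)
            rw [hk'def, Function.update_of_ne (Finset.ne_of_mem_erase hj)]
          rw [herase]
          have hk'i : k' i = k i + 1 := by rw [hk'def, Function.update_self]
          rw [hk'i, Nat.factorial_succ, pow_succ]
          push_cast
          ring
        rw [hprod]
        push_cast
        rw [hki]
        field_simp
      · have hk2 : k' ≠ l := by
          intro h
          apply hk
          funext j
          by_cases hj : j = i
          · subst hj
            have := congrFun h j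
            rw [hk'def, Function.update_self] at this
            rw [hl'def, Function.update_self, ← this]
            simp
          · have := congrFun h j
            rw [hk'def, Function.update_of_ne hj] at this
            rw [hl'def, Function.update_of_ne hj, this]
        rw [if_neg hk, if_neg hk2]
        simp
  -- conclude by linearity via the basis
  have hlin : (I.comp (D i))
      = (((1 / (ρ + ℏ) : ℝ)) : ℂ) • (I.comp (LinearMap.mulRight ℂ (z i))) := by
    refine b.ext (fun kl => ?_)
    rw [hb]
    simp only [LinearMap.comp_apply, LinearMap.smul_apply, LinearMap.mulRight_apply,
      smul_eq_mul]
    exact key kl.1 kl.2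
  have := congrFun (congrArg DFunLike.coe hlin) a
  simpa using this
end

section
/- Let $T_1,\dots,T_n$ be operators on a finite-dimensional Hermitian vector space $\mathbb{C}^r$, $r\geq 1$, satisfying $\sum_{i=1}^n [T_i^\dagger,T_i]=0$. Then for every joint invariant subspace $W\subseteq\mathbb{C}^r$ of $T_1,\dots,T_n$, the orthogonal complement $W^\perp$ is also invariant under all $T_i$; in particular the representation of the free algebra $\mathbb{C}\langle T_1,\dots,T_n\rangle$ on $\mathbb{C}^r$ is semisimple. -/
/-!
Let `p` be the orthogonal projection onto `W` and `q = 1 - p`, so that invariance of `W` under `t`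
reads `q t p = 0`. Then `p [t†, t] p = [p t† p, p t p] - (q t† p)† (q t† p)`, so taking traces and
summing over `i`, the hypothesis gives `∑ tr ((q tᵢ† p)† (q tᵢ† p)) = 0`. Each summand is the trace
of a positive operator, hence `q tᵢ† p = 0`: `W` is invariant under every `tᵢ†`, which means that
`Wᗮ` is invariant under every `tᵢ`.
-/

theorem IsStarProjection.conj_commutator_eq {R : Type*} [Ring R] [StarRing R] {p t : R}
    (hp : IsStarProjection p) (ht : (1 - p) * t * p = 0) :
    p * (star t * t - t * star t) * p =
      p * star t * p * (p * t * p) - p * t * p * (p * star t * p)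
        - star ((1 - p) * star t * p) * ((1 - p) * star t * p) := by
  have hpp : p * p = p := hp.isIdempotentElem
  have hqq : (1 - p) * (1 - p) = 1 - p := hp.one_sub.isIdempotentElem
  have htp : t * p = p * t * p := by
    rw [sub_mul, sub_mul, one_mul, sub_eq_zero] at ht; exact ht
  have h1 : p * star t * p * (p * t * p) = p * (star t * t) * p := by
    rw [← htp, show p * star t * p * (t * p) = p * star t * (p * t * p) by noncomm_ring, ← htp]
    noncomm_ring
  have h2 : p * t * p * (p * star t * p) + p * t * (1 - p) * ((1 - p) * star t * p) =
      p * (t * star t) * p := by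
    rw [show p * t * p * (p * star t * p) = p * t * (p * p) * star t * p by noncomm_ring, hpp,
      show p * t * (1 - p) * ((1 - p) * star t * p) = p * t * ((1 - p) * (1 - p)) * star t * p by
        noncomm_ring, hqq]
    noncomm_ring
  have hstar : star ((1 - p) * star t * p) = p * t * (1 - p) := by
    simp [star_mul, hp.isSelfAdjoint.star_eq, mul_assoc]
  rw [hstar, mul_sub, sub_mul, ← h1, ← h2]
  noncomm_ring

open LinearMap Module.End
open scoped ComplexOrder

theorem LinearMap.IsIdempotentElem.range_mem_invtSubmodule_iff_one_sub_mul_mul_eq_zero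
    {R M : Type*} [Ring R] [AddCommGroup M] [Module R M] {f t : M →ₗ[R] M}
    (hf : IsIdempotentElem f) :
    range f ∈ invtSubmodule t ↔ (1 - f) * t * f = 0 := by
  rw [hf.range_mem_invtSubmodule_iff, sub_mul, sub_mul, one_mul, sub_eq_zero, eq_comm]
  rfl

variable {𝕜 E : Type*} [RCLike 𝕜] [NormedAddCommGroup E] [InnerProductSpace 𝕜 E]
  [FiniteDimensional 𝕜 E]

theorem LinearMap.trace_star_mul_self_eq_zero_iff {f : E →ₗ[𝕜] E} :
    trace 𝕜 E (star f * f) = 0 ↔ f = 0 := by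
  let b := stdOrthonormalBasis 𝕜 E
  have := Matrix.trace_conjTranspose_mul_self_eq_zero_iff (A := toMatrixOrthonormal b f)
  rw [← Matrix.star_eq_conjTranspose, ← map_star, ← map_mul, EmbeddingLike.map_eq_zero_iff] at this
  rwa [trace_eq_matrix_trace 𝕜 b.toBasis]

theorem LinearMap.trace_star_mul_self_nonneg (f : E →ₗ[𝕜] E) : 0 ≤ trace 𝕜 E (star f * f) :=
  (isPositive_adjoint_comp_self f).trace_nonneg

theorem IsStarProjection.trace_conj_commutator {p t : E →ₗ[𝕜] E} (hp : IsStarProjection p)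
    (ht : (1 - p) * t * p = 0) :
    trace 𝕜 E (p * (star t * t - t * star t) * p) =
      -trace 𝕜 E (star ((1 - p) * star t * p) * ((1 - p) * star t * p)) := by
  rw [hp.conj_commutator_eq ht, map_sub, map_sub, trace_mul_comm 𝕜 (p * star t * p), sub_self,
    zero_sub]

theorem LinearMap.mem_invtSubmodule_adjoint_of_sum_commutator_eq_zero {ι : Type*} [Fintype ι]
    {T : ι → E →ₗ[𝕜] E} (hT : ∑ i, (adjoint (T i) ∘ₗ T i - T i ∘ₗ adjoint (T i)) = 0)
    {W : Submodule 𝕜 E} (hW : ∀ i, W ∈ invtSubmodule (T i)) (i : ι) :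
    W ∈ invtSubmodule (adjoint (T i)) := by
  set p : E →ₗ[𝕜] E := W.starProjection.toLinearMap
  have hp : IsStarProjection p :=
    isStarProjection_iff_isSymmetricProjection.mpr W.isSymmetricProjection_starProjection
  have hinvt (t : E →ₗ[𝕜] E) : W ∈ invtSubmodule t ↔ (1 - p) * t * p = 0 := by
    rw [← hp.isIdempotentElem.range_mem_invtSubmodule_iff_one_sub_mul_mul_eq_zero,
      W.range_starProjection]
  set D : ι → E →ₗ[𝕜] E := fun i ↦ (1 - p) * star (T i) * p
  have hD : ∑ i, trace 𝕜 E (star (D i) * D i) = 0 := by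
    have hT' : ∑ i, (star (T i) * T i - T i * star (T i)) = 0 := hT
    simpa only [Finset.mul_sum, Finset.sum_mul, map_sum, mul_zero, zero_mul, map_zero,
      fun i ↦ hp.trace_conj_commutator ((hinvt _).mp (hW i)), Finset.sum_neg_distrib,
      neg_eq_zero] using congrArg (fun X ↦ trace 𝕜 E (p * X * p)) hT'
  have hDi : D i = 0 := by
    rw [← trace_star_mul_self_eq_zero_iff]
    exact (Finset.sum_eq_zero_iff_of_nonneg fun j _ ↦ trace_star_mul_self_nonneg (D j)).mp hD i
      (Finset.mem_univ i)
  exact (hinvt _).mpr hDi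

theorem LinearMap.orthogonal_mem_invtSubmodule_of_sum_commutator_eq_zero {ι : Type*} [Fintype ι]
    {T : ι → E →ₗ[𝕜] E} (hT : ∑ i, (adjoint (T i) ∘ₗ T i - T i ∘ₗ adjoint (T i)) = 0)
    {W : Submodule 𝕜 E} (hW : ∀ i, W ∈ invtSubmodule (T i)) (i : ι) :
    Wᗮ ∈ invtSubmodule (T i) :=
  mem_invtSubmodule_adjoint_iff.mp (mem_invtSubmodule_adjoint_of_sum_commutator_eq_zero hT hW i)

theorem stmt_19_general
    (H : Type) [NormedAddCommGroup H] [InnerProductSpace ℂ H]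
    [FiniteDimensional ℂ H]
    (n : ℕ) (T : Fin n → H →ₗ[ℂ] H)
    (hKing : ∑ i, (LinearMap.adjoint (T i) ∘ₗ T i - T i ∘ₗ LinearMap.adjoint (T i))
        = 0) :
    ∀ W : Submodule ℂ H, (∀ i, ∀ x ∈ W, T i x ∈ W) →
      (∀ i, ∀ x ∈ Wᗮ, T i x ∈ Wᗮ) ∧
      (∃ W' : Submodule ℂ H, (∀ i, ∀ x ∈ W', T i x ∈ W') ∧ IsCompl W W') := by
  intro W hW
  have hperp (i : Fin n) : ∀ x ∈ Wᗮ, T i x ∈ Wᗮ :=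
    (mem_invtSubmodule_iff_forall_mem_of_mem _).mp
      (orthogonal_mem_invtSubmodule_of_sum_commutator_eq_zero hKing
        (fun i ↦ (mem_invtSubmodule_iff_forall_mem_of_mem _).mpr (hW i)) i)
  exact ⟨hperp, Wᗮ, hperp, W.isCompl_orthogonal⟩

/-- If operators `T₁,…,Tₙ` on a finite-dimensional Hermitian space satisfy
`∑ [Tᵢ†,Tᵢ] = 0`, then the orthogonal complement of every joint invariant subspace is again
invariant under all `Tᵢ`; in particular the corresponding representation of the free algebra
is semisimple (every invariant subspace admits an invariant complement). -/
theorem stmt_19 (r : ℕ) (hr : 1 ≤ r)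
    (H : Type) [NormedAddCommGroup H] [InnerProductSpace ℂ H]
    [FiniteDimensional ℂ H] (hrank : Module.finrank ℂ H = r)
    (n : ℕ) (T : Fin n → H →ₗ[ℂ] H)
    (hKing : ∑ i, (LinearMap.adjoint (T i) ∘ₗ T i - T i ∘ₗ LinearMap.adjoint (T i))
        = 0) :
    ∀ W : Submodule ℂ H, (∀ i, ∀ x ∈ W, T i x ∈ W) →
      (∀ i, ∀ x ∈ Wᗮ, T i x ∈ Wᗮ) ∧
      (∃ W' : Submodule ℂ H, (∀ i, ∀ x ∈ W', T i x ∈ W') ∧ IsCompl W W') :=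
  stmt_19_general H n T hKing
end
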